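/- Let n be the number of validators and let V₁ and V₂ be any two views. Suppose the checkpoint C_f = (χ_f, c_f) is finalized in V₁ and the checkpoint C_j = (χ_j, c_j) is justified in V₂, with c_j ≥ c_f. Then either χ_f ≼ χ_j, or there exists a set W of validators with 3·|W| ≥ n such that every validator in W violates condition E₁ or condition E₂ in the combined message set V₁ ∪ V₂. -/
import Mathlib


/-- A checkpoint: a chain (a list of blocks) together with a slot. -/
structure Checkpoint (β : Type) where
  chain : List β
  c : ℕ
deriving DecidableEq

/-- A fin-vote: a validator together with a source and a target checkpoint. -/
abbrev FinVote (β : Type) (n : ℕ) := Fin n × Checkpoint β × Checkpoint β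

/-- A fin-vote from `S` to `T` is valid if `S.chain` is a prefix of `T.chain`
and `S.c < T.c`. -/
def ValidVote {β : Type} (S T : Checkpoint β) : Prop :=
  S.chain <+: T.chain ∧ S.c < T.c

/-- There is a supermajority link `S → T` in view `V`: the vote is valid and at least
`2n/3` validators (formally: `3·card ≥ 2n`) cast the fin-vote `(·, S, T)` in `V`. -/
def SMLink {β : Type} [DecidableEq β] {n : ℕ} (V : Finset (FinVote β n))
    (S T : Checkpoint β) : Prop :=
  ValidVote S T ∧
    2 * n ≤ 3 * (Finset.univ.filter (fun v : Fin n => (v, S, T) ∈ V)).card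

/-- A checkpoint is justified in view `V` (with genesis block `g`) if it is the genesis
checkpoint `(⟨[g], 0⟩)` or is reachable from it by a chain of supermajority links. -/
inductive Justified {β : Type} [DecidableEq β] (g : β) {n : ℕ}
    (V : Finset (FinVote β n)) : Checkpoint β → Prop
  | genesis : Justified g V ⟨[g], 0⟩
  | step (S C : Checkpoint β) : Justified g V S → SMLink V S C → Justified g V C

/-- A checkpoint `C` is finalized in view `V`: it is the genesis checkpoint, or it is
justified and there is a supermajority link `C → T` with `T.c = C.c + 1`. -/
def FinalizedCp {β : Type} [DecidableEq β] (g : β) {n : ℕ}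
    (V : Finset (FinVote β n)) (C : Checkpoint β) : Prop :=
  C = ⟨[g], 0⟩ ∨ (Justified g V C ∧ ∃ T : Checkpoint β, T.c = C.c + 1 ∧ SMLink V C T)

/-- A chain is finalized in view `V` if it is a prefix of the chain of some finalized
checkpoint. -/
def FinalizedChain {β : Type} [DecidableEq β] (g : β) {n : ℕ}
    (V : Finset (FinVote β n)) (χ : List β) : Prop :=
  ∃ C : Checkpoint β, FinalizedCp g V C ∧ χ <+: C.chain

/-- Validator `v` violates condition `E₁` (double voting) in the message set `M`:
`M` contains two distinct fin-votes by `v` whose targets have the same slot. -/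
def ViolatesE1 {β : Type} {n : ℕ} (M : Finset (FinVote β n)) (v : Fin n) : Prop :=
  ∃ S₁ T₁ S₂ T₂ : Checkpoint β, (v, S₁, T₁) ∈ M ∧ (v, S₂, T₂) ∈ M ∧
    (S₁, T₁) ≠ (S₂, T₂) ∧ T₁.c = T₂.c

/-- Validator `v` violates condition `E₂` (surround voting) in the message set `M`:
`M` contains fin-votes `(v, C₁, C₂)` and `(v, C₃, C₄)` with `C₃.c < C₁.c < C₂.c < C₄.c`. -/
def ViolatesE2 {β : Type} {n : ℕ} (M : Finset (FinVote β n)) (v : Fin n) : Prop :=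
  ∃ C₁ C₂ C₃ C₄ : Checkpoint β, (v, C₁, C₂) ∈ M ∧ (v, C₃, C₄) ∈ M ∧
    C₃.c < C₁.c ∧ C₁.c < C₂.c ∧ C₂.c < C₄.c

/-- Any justified checkpoint extends the genesis chain. -/
lemma justified_genesis_prefix {β : Type} [DecidableEq β] (g : β) {n : ℕ}
    (V : Finset (FinVote β n)) (C : Checkpoint β) (h : Justified g V C) :
    [g] <+: C.chain := by
  induction h with
  | genesis => exact List.prefix_refl _
  | step S C hS hl ih => exact ih.trans hl.1.1

/-- Two supermajorities intersect in at least one third of the validators. -/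
lemma supermaj_inter {n : ℕ} (A B : Finset (Fin n))
    (hA : 2 * n ≤ 3 * A.card) (hB : 2 * n ≤ 3 * B.card) :
    n ≤ 3 * (A ∩ B).card := by
  have h1 := Finset.card_union_add_card_inter A B
  have h2 : (A ∪ B).card ≤ n := by
    simpa using Finset.card_le_univ (A ∪ B)
  omega

/-- From two supermajority votes whose combination is slashable, produce the set `W`. -/
lemma slash_set {β : Type} [DecidableEq β] {n : ℕ} (V₁ V₂ : Finset (FinVote β n))
    (A B C D : Checkpoint β)
    (h1 : 2 * n ≤ 3 * (Finset.univ.filter (fun v : Fin n => (v, A, B) ∈ V₁)).card)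
    (h2 : 2 * n ≤ 3 * (Finset.univ.filter (fun v : Fin n => (v, C, D) ∈ V₂)).card)
    (hcond : ∀ v : Fin n, (v, A, B) ∈ V₁ ∪ V₂ → (v, C, D) ∈ V₁ ∪ V₂ →
      ViolatesE1 (V₁ ∪ V₂) v ∨ ViolatesE2 (V₁ ∪ V₂) v) :
    ∃ W : Finset (Fin n), n ≤ 3 * W.card ∧
      ∀ v ∈ W, ViolatesE1 (V₁ ∪ V₂) v ∨ ViolatesE2 (V₁ ∪ V₂) v := by
  refine ⟨_ ∩ _, supermaj_inter _ _ h1 h2, ?_⟩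
  intro v hv
  rw [Finset.mem_inter, Finset.mem_filter, Finset.mem_filter] at hv
  exact hcond v (Finset.mem_union_left _ hv.1.2) (Finset.mem_union_right _ hv.2.2)

/-- **Lemma 6 (accountable justification).** If checkpoint `Cf` is finalized in view `V₁`
and checkpoint `Cj` is justified in view `V₂` with `Cj.c ≥ Cf.c`, then either `Cf.chain`
is a prefix of `Cj.chain`, or at least `n/3` validators violated `E₁` or `E₂` in `V₁ ∪ V₂`. -/
theorem accountable_justification {β : Type} [DecidableEq β] (g : β) (n : ℕ)
    (V₁ V₂ : Finset (FinVote β n)) (Cf Cj : Checkpoint β)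
    (hf : FinalizedCp g V₁ Cf) (hj : Justified g V₂ Cj) (hc : Cf.c ≤ Cj.c) :
    Cf.chain <+: Cj.chain ∨
      ∃ W : Finset (Fin n), n ≤ 3 * W.card ∧
        ∀ v ∈ W, ViolatesE1 (V₁ ∪ V₂) v ∨ ViolatesE2 (V₁ ∪ V₂) v := by
  by_cases hg : Cf = ⟨[g], 0⟩
  · left; rw [hg]; exact justified_genesis_prefix g V₂ Cj hj
  rcases hf with h | ⟨hjust, T, hTc, hCfT⟩
  · exact absurd h hg
  obtain ⟨Sf, hSfJ, hSfLink⟩ : ∃ Sf, Justified g V₁ Sf ∧ SMLink V₁ Sf Cf := by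
    cases hjust with
    | genesis => exact absurd rfl hg
    | step S C hS hl => exact ⟨S, hS, hl⟩
  revert hc
  induction hj with
  | genesis =>
    intro hc
    have h1 : Sf.c < Cf.c := hSfLink.1.2
    have h0 : Cf.c ≤ 0 := hc
    omega
  | step S Cj hS hlink ih =>
    intro hc
    by_cases hpre : Cf.chain <+: Cj.chain
    · exact Or.inl hpre
    right
    have hSCj : S.c < Cj.c := hlink.1.2
    rcases lt_or_eq_of_le hc with hlt | heq
    · -- Cf.c < Cj.c
      rcases le_or_gt Cf.c S.c with hle | hSlt
      · -- use induction hypothesis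
        rcases ih hle with hp | hW
        · exact absurd (hp.trans hlink.1.1) hpre
        · exact hW
      · -- S.c < Cf.c : compare Cj.c with Cf.c + 1
        rcases eq_or_lt_of_le (Nat.succ_le_of_lt hlt) with heq1 | hgt
        · -- Cj.c = Cf.c + 1 = T.c : E₁ between (Cf,T) ∈ V₁ and (S,Cj) ∈ V₂
          refine slash_set V₁ V₂ Cf T S Cj hCfT.2 hlink.2 ?_
          intro v h1 h2
          refine Or.inl ⟨Cf, T, S, Cj, h1, h2, ?_, by omega⟩
          intro hcontra
          have hcs : Cf.c = S.c := congrArg (fun p => p.1.c) hcontra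
          omega
        · -- Cj.c > Cf.c + 1 : E₂, (Cf,T) surrounded by (S,Cj)
          refine slash_set V₁ V₂ Cf T S Cj hCfT.2 hlink.2 ?_
          intro v h1 h2
          exact Or.inr ⟨Cf, T, S, Cj, h1, h2, hSlt, by omega, by omega⟩
    · -- Cf.c = Cj.c : E₁ between (Sf,Cf) ∈ V₁ and (S,Cj) ∈ V₂
      have hne : Cf ≠ Cj := by
        intro h; exact hpre (h ▸ List.prefix_refl _)
      refine slash_set V₁ V₂ Sf Cf S Cj hSfLink.2 hlink.2 ?_
      intro v h1 h2
      refine Or.inl ⟨Sf, Cf, S, Cj, h1, h2, ?_, heq⟩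
      intro hcontra
      exact hne (congrArg Prod.snd hcontra)
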